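/- The neighborhood N = {(1,0), (0,−1), (−1,0), (−1,1), (1,1), (1,−1), (−1,−1)} (neighborhood 127 in the 8-bit numbering of subsets of the Moore neighborhood, i.e. the Moore neighborhood minus (0,1)) admits a timed crossover gate of size 10 × 10 and delay 12. -/

import Mathlib

/-! Sandpile models on ℤ² and timed crossover gates. -/

abbrev Cell : Type := ℤ × ℤ
abbrev Config : Type := Cell → ℕ

namespace Sandpile

/-- The threshold of a sandpile model is the cardinality of its neighborhood. -/
def θ (𝒩 : Finset Cell) : ℕ := 𝒩.card

/-- The parallel sandpile dynamics: each cell reaching the threshold topples,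
sending one grain to each of its out-neighbors. -/
def F (𝒩 : Finset Cell) (c : Config) : Config := fun p =>
  c p - θ 𝒩 * (if θ 𝒩 ≤ c p then 1 else 0)
    + ∑ p' ∈ 𝒩, (if θ 𝒩 ≤ c (p - p') then 1 else 0)

/-- The configuration with a single grain at cell `p`. -/
def one (p : Cell) : Config := fun q => if q = p then 1 else 0

/-- A configuration is stable when every cell is below the threshold. -/
def Stable (𝒩 : Finset Cell) (c : Config) : Prop := ∀ p, c p < θ 𝒩

/-- The rectangle {0,…,M−1} × {0,…,N'−1}. -/
def Rect (M N' : ℕ) : Set Cell :=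
  {p | 0 ≤ p.1 ∧ p.1 < (M : ℤ) ∧ 0 ≤ p.2 ∧ p.2 < (N' : ℤ)}

/-- The four corners of the rectangle. -/
def Corners (M N' : ℕ) : Set Cell :=
  {(0, 0), ((M : ℤ) - 1, 0), (0, (N' : ℤ) - 1), ((M : ℤ) - 1, (N' : ℤ) - 1)}

/-- The four sides of the rectangle. -/
def side (M N' : ℕ) (i : Fin 4) : Set Cell :=
  if i = 0 then {p | p.1 = 0 ∧ 0 ≤ p.2 ∧ p.2 < (N' : ℤ)}
  else if i = 1 then {p | p.2 = 0 ∧ 0 ≤ p.1 ∧ p.1 < (M : ℤ)}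
  else if i = 2 then {p | p.1 = (M : ℤ) - 1 ∧ 0 ≤ p.2 ∧ p.2 < (N' : ℤ)}
  else {p | p.2 = (N' : ℤ) - 1 ∧ 0 ≤ p.1 ∧ p.1 < (M : ℤ)}

/-- A timed crossover gate of size M × N' and delay T for the sandpile model 𝒩:
a stable configuration `g` supported on the rectangle, together with four
non-corner cells `n`, `e`, `s`, `w` on four pairwise different sides, `n, s`
(resp. `w, e`) on opposite sides, such that adding a grain at `n` (resp. `w`)
makes `s` (resp. `e`) reach the threshold at time exactly `T`, while no cell
on the two other sides reaches the threshold at any time `t ≤ T`. -/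
def IsTimedCrossoverGate (𝒩 : Finset Cell) (M N' T : ℕ)
    (g : Config) (n e s w : Cell) : Prop :=
  Stable 𝒩 g ∧
  (∀ p, p ∉ Rect M N' → g p = 0) ∧
  n ∈ Rect M N' ∧ e ∈ Rect M N' ∧ s ∈ Rect M N' ∧ w ∈ Rect M N' ∧
  n ∉ Corners M N' ∧ e ∉ Corners M N' ∧ s ∉ Corners M N' ∧ w ∉ Corners M N' ∧
  ∃ iN iE iS iW : Fin 4,
    n ∈ side M N' iN ∧ e ∈ side M N' iE ∧ s ∈ side M N' iS ∧ w ∈ side M N' iW ∧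
    ((iN : ℤ) - (iS : ℤ)).natAbs = 2 ∧
    ((iW : ℤ) - (iE : ℤ)).natAbs = 2 ∧
    ({iN, iE, iS, iW} : Finset (Fin 4)) = Finset.univ ∧
    θ 𝒩 ≤ (F 𝒩)^[T] (g + one n) s ∧
    (∀ p ∈ side M N' iW ∪ side M N' iE, ∀ t ≤ T, (F 𝒩)^[t] (g + one n) p < θ 𝒩) ∧
    θ 𝒩 ≤ (F 𝒩)^[T] (g + one w) e ∧
    (∀ p ∈ side M N' iN ∪ side M N' iS, ∀ t ≤ T, (F 𝒩)^[t] (g + one w) p < θ 𝒩)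

/-! The gate is explicit, so the theorem is a finite computation. In each of the two runs,
every cell that topples during the first twelve steps sends all its grains into the window
`[-1, 9] × [0, 10]`; on configurations supported there, `F` can be replayed on a finite grid,
and the kernel evaluates the replay. -/

def TopplesWithin (𝒩 B : Finset Cell) (c : Config) : Prop :=
  ∀ p ∈ B, θ 𝒩 ≤ c p → ∀ d ∈ 𝒩, p + d ∈ B

instance (𝒩 B : Finset Cell) (c : Config) : Decidable (TopplesWithin 𝒩 B c) :=
  inferInstanceAs (Decidable (∀ p ∈ B, θ 𝒩 ≤ c p → ∀ d ∈ 𝒩, p + d ∈ B))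

theorem F_eq_zero_of_notMem {𝒩 B : Finset Cell} {c : Config} (hc : ∀ p ∉ B, c p = 0)
    (hB : TopplesWithin 𝒩 B c) {p : Cell} (hp : p ∉ B) : F 𝒩 c p = 0 := by
  have hsum : ∀ d ∈ 𝒩, (if θ 𝒩 ≤ c (p - d) then 1 else 0) = 0 := by
    intro d hd
    refine if_neg fun htop => hp ?_
    by_cases hpd : p - d ∈ B
    · simpa using hB (p - d) hpd htop d hd
    · have : 0 < θ 𝒩 := Finset.card_pos.mpr ⟨d, hd⟩
      rw [hc _ hpd] at htop
      omega
  simp [F, hc p hp, Finset.sum_eq_zero hsum]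

section Grid

variable (x₀ y₀ : ℤ) (w h : ℕ)

noncomputable def window : Finset Cell :=
  Finset.Ico x₀ (x₀ + w) ×ˢ Finset.Ico y₀ (y₀ + h)

def ofGrid (A : List (List ℕ)) : Config := fun p =>
  if x₀ ≤ p.1 ∧ y₀ ≤ p.2 then (A.getD (p.2 - y₀).toNat []).getD (p.1 - x₀).toNat 0 else 0

def toGrid (c : Config) : List (List ℕ) :=
  (List.range h).map fun i : ℕ => (List.range w).map fun j : ℕ => c (x₀ + j, y₀ + i)

/-- Iterating `snap ∘ F` rather than `F` makes the kernel evaluate each cell once per step: the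
list stores the step, whereas `(F 𝒩)^[t] c p` reaches the same cell along exponentially many
syntactically different paths. -/
def snap (c : Config) : Config := ofGrid x₀ y₀ (toGrid x₀ y₀ w h c)

variable {x₀ y₀ w h}

theorem mem_window {p : Cell} :
    p ∈ window x₀ y₀ w h ↔ x₀ ≤ p.1 ∧ p.1 < x₀ + w ∧ y₀ ≤ p.2 ∧ p.2 < y₀ + h := by
  simp [window, and_assoc]

theorem coe_window_zero (M N' : ℕ) : (window 0 0 M N' : Set Cell) = Rect M N' := by
  ext p
  simp [mem_window, Rect]

theorem snap_apply (c : Config) (p : Cell) :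
    snap x₀ y₀ w h c p = if p ∈ window x₀ y₀ w h then c p else 0 := by
  obtain ⟨x, y⟩ := p
  simp only [snap, ofGrid, toGrid, mem_window]
  by_cases hx : x₀ ≤ x <;> by_cases hy : y₀ ≤ y
  · obtain ⟨i, rfl⟩ : ∃ i : ℕ, y = y₀ + i := ⟨(y - y₀).toNat, by omega⟩
    obtain ⟨j, rfl⟩ : ∃ j : ℕ, x = x₀ + j := ⟨(x - x₀).toNat, by omega⟩
    by_cases hi : i < h <;> by_cases hj : j < w <;> simp [hi, hj]
  all_goals simp [hx, hy]

theorem ofGrid_eq_zero {A : List (List ℕ)} (hA : A.length ≤ h) (hr : ∀ r ∈ A, r.length ≤ w)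
    {p : Cell} (hp : p ∉ window x₀ y₀ w h) : ofGrid x₀ y₀ A p = 0 := by
  rw [mem_window] at hp
  unfold ofGrid
  split_ifs with hxy
  · rw [List.getD_eq_getElem?_getD, List.getD_eq_getElem?_getD]
    rcases hrow : A[(p.2 - y₀).toNat]? with _ | r
    · simp
    have hi := (List.getElem?_eq_some_iff.mp hrow).1
    have hj : r.length ≤ (p.1 - x₀).toNat := by
      have := hr r (List.mem_of_getElem? hrow)
      omega
    simp [List.getElem?_eq_none hj]
  · rfl

theorem ofGrid_lt {A : List (List ℕ)} {k : ℕ} (hk : 0 < k) (hA : ∀ r ∈ A, ∀ a ∈ r, a < k)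
    (p : Cell) : ofGrid x₀ y₀ A p < k := by
  unfold ofGrid
  split_ifs
  · rw [List.getD_eq_getElem?_getD, List.getD_eq_getElem?_getD]
    rcases hr : A[(p.2 - y₀).toNat]? with _ | r
    · simpa using hk
    rcases ha : r[(p.1 - x₀).toNat]? with _ | a
    · simpa [ha] using hk
    · simpa [ha] using hA r (List.mem_of_getElem? hr) a (List.mem_of_getElem? ha)
  · exact hk

end Grid

section Replay

variable {𝒩 : Finset Cell} {x₀ y₀ : ℤ} {w h : ℕ} {c : Config}

theorem snap_F_eq_F (hc : ∀ p ∉ window x₀ y₀ w h, c p = 0)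
    (htop : TopplesWithin 𝒩 (window x₀ y₀ w h) c) : snap x₀ y₀ w h (F 𝒩 c) = F 𝒩 c := by
  funext p
  rw [snap_apply]
  split_ifs with hp
  · rfl
  · exact (F_eq_zero_of_notMem hc htop hp).symm

theorem iterate_F_eq_iterate_snap {T : ℕ} (hc : ∀ p ∉ window x₀ y₀ w h, c p = 0)
    (htop : ∀ t < T, TopplesWithin 𝒩 (window x₀ y₀ w h) ((snap x₀ y₀ w h ∘ F 𝒩)^[t] c))
    {t : ℕ} (ht : t ≤ T) : (F 𝒩)^[t] c = (snap x₀ y₀ w h ∘ F 𝒩)^[t] c := by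
  induction t with
  | zero => rfl
  | succ t ih =>
    have hvanish : ∀ p ∉ window x₀ y₀ w h, ((snap x₀ y₀ w h ∘ F 𝒩)^[t] c) p = 0 := by
      intro p hp
      rcases t with _ | t
      · exact hc p hp
      · rw [Function.iterate_succ_apply', Function.comp_apply, snap_apply, if_neg hp]
    rw [Function.iterate_succ_apply', Function.iterate_succ_apply', ih (by omega),
      Function.comp_apply, snap_F_eq_F hvanish (htop t (by omega))]

theorem fires_and_quiet_of_replay {T : ℕ} {s : Cell} {Q : Finset Cell}
    (hc : ∀ p ∉ window x₀ y₀ w h, c p = 0)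
    (htop : ∀ t < T, TopplesWithin 𝒩 (window x₀ y₀ w h) ((snap x₀ y₀ w h ∘ F 𝒩)^[t] c))
    (hfire : θ 𝒩 ≤ (snap x₀ y₀ w h ∘ F 𝒩)^[T] c s)
    (hquiet : ∀ t ≤ T, ∀ p ∈ Q, (snap x₀ y₀ w h ∘ F 𝒩)^[t] c p < θ 𝒩) :
    θ 𝒩 ≤ (F 𝒩)^[T] c s ∧ ∀ p ∈ Q, ∀ t ≤ T, (F 𝒩)^[t] c p < θ 𝒩 := by
  refine ⟨?_, fun p hp t ht => ?_⟩
  · rwa [iterate_F_eq_iterate_snap hc htop le_rfl]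
  · rw [iterate_F_eq_iterate_snap hc htop ht]
    exact hquiet t ht p hp

end Replay

noncomputable def verticalSides (M N' : ℕ) : Finset Cell :=
  {0, (M : ℤ) - 1} ×ˢ Finset.Ico 0 (N' : ℤ)

noncomputable def horizontalSides (M N' : ℕ) : Finset Cell :=
  Finset.Ico 0 (M : ℤ) ×ˢ {0, (N' : ℤ) - 1}

theorem side_zero_union_side_two_subset (M N' : ℕ) :
    side M N' 0 ∪ side M N' 2 ⊆ verticalSides M N' := by
  rintro ⟨x, y⟩ hp
  simp only [side, Fin.isValue, Fin.reduceEq, ↓reduceIte, Set.mem_union,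
    Set.mem_ofPred_eq] at hp
  simp only [verticalSides, Finset.coe_product, Finset.coe_insert, Finset.coe_singleton,
    Finset.coe_Ico, Set.mem_prod, Set.mem_insert_iff, Set.mem_singleton_iff, Set.mem_Ico]
  omega

theorem side_three_union_side_one_subset (M N' : ℕ) :
    side M N' 3 ∪ side M N' 1 ⊆ horizontalSides M N' := by
  rintro ⟨x, y⟩ hp
  simp only [side, Fin.isValue, Fin.reduceEq, ↓reduceIte, one_ne_zero, Set.mem_union,
    Set.mem_ofPred_eq] at hp
  simp only [horizontalSides, Finset.coe_product, Finset.coe_insert, Finset.coe_singleton,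
    Finset.coe_Ico, Set.mem_prod, Set.mem_insert_iff, Set.mem_singleton_iff, Set.mem_Ico]
  omega

def nbhd127 : Finset Cell := {(1,0),(0,-1),(-1,0),(-1,1),(1,1),(1,-1),(-1,-1)}

/-- Rows are listed from top (`y = 9`) to bottom (`y = 0`). -/
def gate : Config := ofGrid 0 0 <| List.reverse
  [[0, 0, 0, 0, 0, 6, 0, 0, 0, 0],
   [0, 0, 0, 0, 0, 6, 6, 0, 0, 0],
   [0, 0, 0, 0, 0, 5, 0, 0, 0, 0],
   [0, 0, 0, 0, 6, 0, 0, 0, 0, 0],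
   [0, 0, 0, 6, 5, 0, 0, 0, 0, 0],
   [0, 0, 0, 5, 4, 0, 0, 6, 0, 0],
   [0, 0, 6, 6, 3, 6, 6, 0, 6, 0],
   [6, 5, 0, 0, 6, 3, 0, 0, 6, 0],
   [6, 6, 0, 0, 5, 0, 0, 0, 0, 6],
   [0, 0, 0, 0, 6, 0, 0, 0, 0, 0]]

theorem gate_stable : Stable nbhd127 gate :=
  ofGrid_lt (by decide) (by decide)

theorem gate_eq_zero {p : Cell} (hp : p ∉ window 0 0 10 10) : gate p = 0 :=
  ofGrid_eq_zero (by decide) (by decide) hp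

theorem gate_add_one_eq_zero {n : Cell} (hn : n ∈ window (-1) 0 11 11) :
    ∀ p ∉ window (-1) 0 11 11, (gate + one n) p = 0 := by
  intro p hp
  have hgate : gate p = 0 := gate_eq_zero fun h => hp <| by
    rw [mem_window] at h ⊢
    push_cast at h ⊢
    omega
  have hpn : p ≠ n := by
    rintro rfl
    exact hp hn
  simp [hgate, one, hpn]

theorem replay_from_north :
    (∀ t < 12, TopplesWithin nbhd127 (window (-1) 0 11 11)
      ((snap (-1) 0 11 11 ∘ F nbhd127)^[t] (gate + one (5, 9)))) ∧
    θ nbhd127 ≤ (snap (-1) 0 11 11 ∘ F nbhd127)^[12] (gate + one (5, 9)) (4, 0) ∧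
    ∀ t ≤ 12, ∀ p ∈ verticalSides 10 10,
      (snap (-1) 0 11 11 ∘ F nbhd127)^[t] (gate + one (5, 9)) p < θ nbhd127 := by
  decide +kernel

theorem replay_from_west :
    (∀ t < 12, TopplesWithin nbhd127 (window (-1) 0 11 11)
      ((snap (-1) 0 11 11 ∘ F nbhd127)^[t] (gate + one (0, 1)))) ∧
    θ nbhd127 ≤ (snap (-1) 0 11 11 ∘ F nbhd127)^[12] (gate + one (0, 1)) (9, 1) ∧
    ∀ t ≤ 12, ∀ p ∈ horizontalSides 10 10,
      (snap (-1) 0 11 11 ∘ F nbhd127)^[t] (gate + one (0, 1)) p < θ nbhd127 := by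
  decide +kernel

theorem nbhd127_timed_crossover :
    ∃ g n e s w, IsTimedCrossoverGate
      ({(1,0),(0,-1),(-1,0),(-1,1),(1,1),(1,-1),(-1,-1)} : Finset Cell) 10 10 12 g n e s w := by
  obtain ⟨htopN, hfireN, hquietN⟩ := replay_from_north
  obtain ⟨htopW, hfireW, hquietW⟩ := replay_from_west
  obtain ⟨fires_south, quiet_west_east⟩ :=
    fires_and_quiet_of_replay (gate_add_one_eq_zero (n := (5, 9)) (by decide)) htopN hfireN hquietN
  obtain ⟨fires_east, quiet_north_south⟩ :=
    fires_and_quiet_of_replay (gate_add_one_eq_zero (n := (0, 1)) (by decide)) htopW hfireW hquietW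
  refine ⟨gate, (5, 9), (9, 1), (4, 0), (0, 1), gate_stable,
    fun p hp => gate_eq_zero (by rwa [← Finset.mem_coe, coe_window_zero]),
    ?_, ?_, ?_, ?_, ?_, ?_, ?_, ?_, 3, 2, 1, 0, ?_, ?_, ?_, ?_, by decide, by decide, by decide,
    fires_south, fun p hp => quiet_west_east p (side_zero_union_side_two_subset 10 10 hp),
    fires_east, fun p hp => quiet_north_south p (side_three_union_side_one_subset 10 10 hp)⟩
  all_goals simp [Rect, Corners, side]

end Sandpile
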